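/- Let G be a finite group acting 2-transitively and faithfully on a set with point stabilizer M, where M is non-normal in G. Then G is a setwise product of 3 conjugates of M, and γ_cp(G) = 3. -/

import Mathlib

/-!
A point stabilizer `M` of a 2-transitive action has exactly two double cosets, `M` and
`G \ M`. Since `M` is not normal, some conjugate `M ^ g` contains an element `m ∉ M`, and then
`M * M ^ g * M ⊇ M ∪ M m M = G`. Two conjugates never suffice: if `A * A ^ g = G`, writing
`g = u v` with `u ∈ A`, `v ∈ A ^ g` forces `g ∈ A`, hence `A ^ g = A` and `A = G`.
-/

open Pointwise

/-- The conjugate subgroup `A ^ g = g⁻¹ A g`. -/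
def conjugate {G : Type*} [Group G] (A : Subgroup G) (g : G) : Subgroup G :=
  Subgroup.map (MulAut.conj g⁻¹).toMonoidHom A

/-- `G` is a product, in some order, of `k` pairwise conjugate proper subgroups. -/
def IsConjProdCover {G : Type*} [Group G] (k : ℕ) : Prop :=
  ∃ l : List (Subgroup G), l.length = k ∧ 2 ≤ l.length ∧
    (∀ A ∈ l, A ≠ ⊤) ∧ (∀ A ∈ l, ∀ B ∈ l, ∃ g : G, B = conjugate A g) ∧
    (l.map (fun A => (A : Set G))).prod = Set.univ

/-- `γ_cp(G)`. -/
noncomputable def gammaCP (G : Type*) [Group G] : ℕ∞ :=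
  sInf {k : ℕ∞ | ∃ n : ℕ, k = (n : ℕ∞) ∧ IsConjProdCover (G := G) n}

section Conjugate

variable {G : Type*} [Group G]

lemma mem_conjugate {A : Subgroup G} {g x : G} : x ∈ conjugate A g ↔ g * x * g⁻¹ ∈ A := by
  simp only [conjugate, Subgroup.mem_map, MulEquiv.coe_toMonoidHom, MulAut.conj_apply]
  constructor
  · rintro ⟨b, hb, rfl⟩
    simpa [mul_assoc] using hb
  · exact fun h => ⟨g * x * g⁻¹, h, by group⟩

lemma conjugate_one (A : Subgroup G) : conjugate A 1 = A := by
  ext x; simp [mem_conjugate]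

lemma conjugate_conjugate (A : Subgroup G) (g h : G) :
    conjugate (conjugate A g) h = conjugate A (g * h) := by
  ext x; simp [mem_conjugate, mul_assoc]

lemma conjugate_ne_top {A : Subgroup G} (hA : A ≠ ⊤) (g : G) : conjugate A g ≠ ⊤ := by
  refine fun h => hA (eq_top_iff.mpr fun x _ => ?_)
  have hx : g⁻¹ * x * g ∈ conjugate A g := h ▸ Subgroup.mem_top _
  simpa [mem_conjugate, mul_assoc] using hx

lemma conjugate_eq_self_of_mem {A : Subgroup G} {g : G} (hg : g ∈ A) : conjugate A g = A := by
  ext x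
  rw [mem_conjugate]
  constructor
  · intro h
    simpa [mul_assoc] using A.mul_mem (A.mul_mem (A.inv_mem hg) h) hg
  · exact fun h => A.mul_mem (A.mul_mem hg h) (A.inv_mem hg)

lemma exists_not_conjugate_le {A : Subgroup G} (hA : ¬ A.Normal) :
    ∃ g : G, ¬ conjugate A g ≤ A := by
  by_contra! h
  refine hA ⟨fun n hn g => h g⁻¹ ?_⟩
  rw [mem_conjugate]
  simpa [mul_assoc] using hn

lemma coe_mul_coe_conjugate_ne_univ {A : Subgroup G} (hA : A ≠ ⊤) (g : G) :
    (A : Set G) * (conjugate A g : Set G) ≠ Set.univ := by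
  intro h
  obtain ⟨u, hu, v, hv, rfl⟩ := Set.mem_mul.mp (h ▸ Set.mem_univ g)
  have huvu : u * v * u⁻¹ ∈ A := by
    rw [SetLike.mem_coe, mem_conjugate] at hv
    simpa [mul_assoc] using hv
  have hv' : v ∈ A := by
    simpa [mul_assoc] using A.mul_mem (A.mul_mem (A.inv_mem hu) huvu) hu
  rw [conjugate_eq_self_of_mem (A.mul_mem hu hv'), coe_mul_coe] at h
  exact hA (SetLike.coe_injective (h.trans Subgroup.coe_top.symm))

lemma not_isConjProdCover_two : ¬ IsConjProdCover (G := G) 2 := by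
  rintro ⟨l, hlen, -, hne, hconj, hprod⟩
  match l, hlen with
  | [A, B], _ =>
    obtain ⟨g, rfl⟩ := hconj A (by simp) B (by simp)
    exact coe_mul_coe_conjugate_ne_univ (hne A (by simp)) g (by simpa using hprod)

lemma isConjProdCover_three {A : Subgroup G} (hA : A ≠ ⊤) {g₁ g₂ g₃ : G}
    (h : (conjugate A g₁ : Set G) * (conjugate A g₂ : Set G) * (conjugate A g₃ : Set G) =
      Set.univ) :
    IsConjProdCover (G := G) 3 := by
  refine ⟨[conjugate A g₁, conjugate A g₂, conjugate A g₃], rfl, by norm_num, ?_, ?_, ?_⟩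
  · simp only [List.mem_cons, List.not_mem_nil, or_false]
    rintro B (rfl | rfl | rfl) <;> exact conjugate_ne_top hA _
  · simp only [List.mem_cons, List.not_mem_nil, or_false]
    rintro B (rfl | rfl | rfl) C (rfl | rfl | rfl) <;>
      exact ⟨_⁻¹ * _, by rw [conjugate_conjugate, mul_inv_cancel_left]⟩
  · simpa [mul_assoc] using h

lemma gammaCP_eq_three (h : IsConjProdCover (G := G) 3) : gammaCP G = 3 := by
  refine le_antisymm (sInf_le ⟨3, rfl, h⟩) (le_sInf ?_)
  rintro k ⟨n, rfl, hn⟩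
  have hn2 : 2 ≤ n := by
    obtain ⟨l, rfl, h2, -⟩ := hn
    exact h2
  have hn3 : n ≠ 2 := by
    rintro rfl
    exact not_isConjProdCover_two hn
  exact_mod_cast (show 3 ≤ n by omega)

end Conjugate

section TwoTransitive

variable {G α : Type*} [Group G] [MulAction G α]
  (h2trans : ∀ a b c d : α, a ≠ b → c ≠ d → ∃ g : G, g • a = c ∧ g • b = d)
include h2trans

lemma exists_eq_mul_mul_of_not_mem_stabilizer (a : α) {x y : G}
    (hx : x ∉ MulAction.stabilizer G a) (hy : y ∉ MulAction.stabilizer G a) :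
    ∃ u ∈ MulAction.stabilizer G a, ∃ v ∈ MulAction.stabilizer G a, x = u * y * v := by
  rw [MulAction.mem_stabilizer_iff] at hx hy
  obtain ⟨u, hua, huy⟩ := h2trans a (y • a) a (x • a) (Ne.symm hy) (Ne.symm hx)
  refine ⟨u, hua, y⁻¹ * u⁻¹ * x, ?_, by group⟩
  rw [MulAction.mem_stabilizer_iff, mul_smul, mul_smul, ← huy]
  simp

lemma stabilizer_mul_mul_stabilizer_eq_univ (a : α) {B : Subgroup G}
    (hB : ¬ B ≤ MulAction.stabilizer G a) :
    (MulAction.stabilizer G a : Set G) * (B : Set G) * (MulAction.stabilizer G a : Set G) =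
      Set.univ := by
  obtain ⟨m, hmB, hm⟩ := SetLike.not_le_iff_exists.mp hB
  refine Set.eq_univ_of_forall fun x => ?_
  by_cases hx : x ∈ MulAction.stabilizer G a
  · simpa using Set.mul_mem_mul (Set.mul_mem_mul hx B.one_mem) (Subgroup.one_mem _)
  · obtain ⟨u, hu, v, hv, rfl⟩ := exists_eq_mul_mul_of_not_mem_stabilizer h2trans a hx hm
    exact Set.mul_mem_mul (Set.mul_mem_mul hu hmB) hv

end TwoTransitive

theorem stmt_10_general {G : Type*} [Group G] {α : Type*} [MulAction G α]
    (h2trans : ∀ a b c d : α, a ≠ b → c ≠ d → ∃ g : G, g • a = c ∧ g • b = d)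
    (a : α) (M : Subgroup G) (hM : M = MulAction.stabilizer G a)
    (hnn : ¬ M.Normal) :
    (∃ g₁ g₂ g₃ : G,
        ((conjugate M g₁ : Subgroup G) : Set G) * ((conjugate M g₂ : Subgroup G) : Set G) *
          ((conjugate M g₃ : Subgroup G) : Set G) = Set.univ) ∧
      gammaCP G = 3 := by
  have hM_ne_top : M ≠ ⊤ := by
    rintro rfl
    exact hnn inferInstance
  obtain ⟨g, hg⟩ := exists_not_conjugate_le hnn
  have hprod : ((conjugate M 1 : Subgroup G) : Set G) * ((conjugate M g : Subgroup G) : Set G) *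
      ((conjugate M 1 : Subgroup G) : Set G) = Set.univ := by
    rw [conjugate_one, hM]
    exact stabilizer_mul_mul_stabilizer_eq_univ h2trans a (hM ▸ hg)
  exact ⟨⟨1, g, 1, hprod⟩, gammaCP_eq_three (isConjProdCover_three hM_ne_top hprod)⟩

theorem stmt_10 {G : Type*} [Group G] [Finite G] {α : Type*} [MulAction G α]
    [FaithfulSMul G α]
    (h2trans : ∀ a b c d : α, a ≠ b → c ≠ d → ∃ g : G, g • a = c ∧ g • b = d)
    (a : α) (M : Subgroup G) (hM : M = MulAction.stabilizer G a)
    (hnn : ¬ M.Normal) :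
    (∃ g₁ g₂ g₃ : G,
        ((conjugate M g₁ : Subgroup G) : Set G) * ((conjugate M g₂ : Subgroup G) : Set G) *
          ((conjugate M g₃ : Subgroup G) : Set G) = Set.univ) ∧
      gammaCP G = 3 :=
  stmt_10_general h2trans a M hM hnn
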